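/- For all natural numbers n_M and Δ, the maximum over integers x with 0 ≤ x ≤ n_M of the quantity 2·n_M + Δ − x − ρ(x) equals n_M + φ(n_M, Δ). -/

import Mathlib

/-- Down-shift operator `S^Δ` on matrices over `F₂`: shifts rows down by `Δ`,
filling the top `Δ` rows with zeros. -/
def shiftS (Δ : ℕ) {r c : ℕ} (X : Matrix (Fin r) (Fin c) (ZMod 2)) :
    Matrix (Fin r) (Fin c) (ZMod 2) :=
  fun i j => if _h : Δ ≤ (i : ℕ) then
      X ⟨(i : ℕ) - Δ, lt_of_le_of_lt (Nat.sub_le _ _) i.isLt⟩ j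
    else 0

/-- The function `φ(p,q)`: with `l = p div q` (convention `p div 0 = 0`),
`φ(p,q) = q + l·q/2` for `l` even, `φ(p,q) = p − (l−1)·q/2` for `l` odd. -/
def phi (p q : ℕ) : ℕ :=
  if Even (p / q) then q + (p / q / 2) * q else p - ((p / q - 1) / 2) * q

/-- Probability that the random variable `f` takes the value `a`, for the
discrete probability mass function `p`. -/
noncomputable def prEq {Ω α : Type*} [Fintype Ω] [DecidableEq α]
    (p : Ω → ℝ) (f : Ω → α) (a : α) : ℝ :=
  ∑ ω ∈ Finset.univ.filter (fun ω => f ω = a), p ω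

/-- Shannon entropy (base 2) of the random variable `f` under the pmf `p`. -/
noncomputable def entropy2 {Ω α : Type*} [Fintype Ω] [Fintype α] [DecidableEq α]
    (p : Ω → ℝ) (f : Ω → α) : ℝ :=
  -∑ a : α, prEq p f a * Real.logb 2 (prEq p f a)

/-- Independence of two random variables under the pmf `p`. -/
def IndepRV {Ω α β : Type*} [Fintype Ω] [DecidableEq α] [DecidableEq β]
    (p : Ω → ℝ) (f : Ω → α) (g : Ω → β) : Prop :=
  ∀ a b, prEq p (fun ω => (f ω, g ω)) (a, b) = prEq p f a * prEq p g b

/-- Mutual independence of three random variables under the pmf `p`. -/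
def MutIndep3 {Ω α β γ : Type*} [Fintype Ω] [DecidableEq α] [DecidableEq β]
    [DecidableEq γ] (p : Ω → ℝ) (f : Ω → α) (g : Ω → β) (h : Ω → γ) : Prop :=
  ∀ a b c, prEq p (fun ω => (f ω, g ω, h ω)) (a, b, c)
      = prEq p f a * prEq p g b * prEq p h c

/-- Mutual information (base 2) `I(f; g) = H(f) + H(g) − H(f, g)`. -/
noncomputable def mutInfo2 {Ω α β : Type*} [Fintype Ω] [Fintype α] [Fintype β]
    [DecidableEq α] [DecidableEq β] (p : Ω → ℝ) (f : Ω → α) (g : Ω → β) : ℝ :=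
  entropy2 p f + entropy2 p g - entropy2 p (fun ω => (f ω, g ω))

/-- Number of ones in a vector over `F₂`. -/
def wt {n : ℕ} (a : Fin n → ZMod 2) : ℕ :=
  (Finset.univ.filter (fun i => a i = 1)).card

/-- `γ1(a)`: complement of `a` stacked over the all-ones vector of length `Δ`. -/
def gamma1 (Δ : ℕ) {nM : ℕ} (a : Fin nM → ZMod 2) : Fin (nM + Δ) → ZMod 2 :=
  fun i => if h : (i : ℕ) < nM then 1 - a ⟨(i : ℕ), h⟩ else 1

/-- `γ2(a)`: the zero vector of length `Δ` stacked over the complement of `a`. -/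
def gamma2 (Δ : ℕ) {nM : ℕ} (a : Fin nM → ZMod 2) : Fin (nM + Δ) → ZMod 2 :=
  fun i => if _h : Δ ≤ (i : ℕ) then
      1 - a ⟨(i : ℕ) - Δ, by have := i.isLt; omega⟩
    else 0

/-- The overlap `γ1(a)^T γ2(a)`: number of positions where both are one. -/
def overlap (Δ : ℕ) {nM : ℕ} (a : Fin nM → ZMod 2) : ℕ :=
  (Finset.univ.filter (fun i => gamma1 Δ a i = 1 ∧ gamma2 Δ a i = 1)).card

/-- `ρ(x)`: minimal overlap over all vectors `a ∈ F₂^{n_M}` with `|a| = x`. -/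
noncomputable def rho (Δ nM x : ℕ) : ℕ :=
  sInf (overlap Δ '' {a : Fin nM → ZMod 2 | wt a = x})

/-! Let `Z` be the zero set of `a`. The overlap counts the `j ∈ Z` whose shift `j + Δ` leaves
`[0, n_M)` or stays in `Z`; the remaining elements of `Z` form a set `G ⊆ [0, n_M - Δ)` with
`G ∩ (G + Δ) = ∅`, and `2 n_M + Δ - |a| - overlap(a) = n_M + Δ + |G|`.
In each block `[2kΔ, 2kΔ + 2Δ)` such a set meets every pair `{j, j + Δ}` at most once, so a set in
`[0, N)` with this property has at most `Δ ⌊N / 2Δ⌋ + min (N mod 2Δ) Δ` elements; the union of the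
half-blocks `[2kΔ, 2kΔ + Δ)` attains the bound and has overlap zero. It remains to check that
`φ(n_M, Δ) = Δ + Δ ⌊(n_M - Δ) / 2Δ⌋ + min ((n_M - Δ) mod 2Δ) Δ`. -/

open Finset

def blockCount (Δ N : ℕ) : ℕ := Δ * (N / (2 * Δ)) + min (N % (2 * Δ)) Δ

section blockCount

variable {Δ N : ℕ}

lemma blockCount_of_lt (h : N < 2 * Δ) : blockCount Δ N = min N Δ := by
  simp [blockCount, Nat.div_eq_of_lt h, Nat.mod_eq_of_lt h]

lemma blockCount_add_two_mul : blockCount Δ (N + 2 * Δ) = blockCount Δ N + Δ := by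
  rcases Nat.eq_zero_or_pos Δ with rfl | hΔ
  · simp [blockCount]
  · simp only [blockCount, Nat.add_div_right N (by omega : 0 < 2 * Δ), Nat.add_mod_right]
    ring

lemma blockCount_two_mul_mul_add {k r : ℕ} (hr : r < 2 * Δ) :
    blockCount Δ (2 * Δ * k + r) = Δ * k + min r Δ := by
  rw [blockCount, Nat.mul_add_div (by omega), Nat.mul_add_mod, Nat.div_eq_of_lt hr,
    Nat.mod_eq_of_lt hr, add_zero]

end blockCount

lemma phi_eq_add_blockCount (n Δ : ℕ) : phi n Δ = Δ + blockCount Δ (n - Δ) := by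
  rcases Nat.eq_zero_or_pos Δ with rfl | hΔ
  · simp [phi, blockCount]
  obtain ⟨q, r, hr, rfl⟩ : ∃ q r, r < Δ ∧ n = Δ * q + r :=
    ⟨n / Δ, n % Δ, Nat.mod_lt n hΔ, (Nat.div_add_mod n Δ).symm⟩
  have hq : (Δ * q + r) / Δ = q := by rw [Nat.mul_add_div hΔ, Nat.div_eq_of_lt hr, add_zero]
  obtain ⟨k, rfl | rfl⟩ := Nat.even_or_odd' q
  · rcases k with _ | k
    · simp [phi, Nat.div_eq_of_lt hr, blockCount_of_lt (by omega : r - Δ < 2 * Δ)]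
      omega
    · have hsplit : Δ * (2 * (k + 1)) + r - Δ = 2 * Δ * k + (Δ + r) := by ring_nf; omega
      rw [phi, if_pos (by rw [hq]; exact even_two_mul _), hsplit,
        blockCount_two_mul_mul_add (by omega), hq, Nat.mul_div_cancel_left _ two_pos]
      ring_nf; omega
  · have hsplit : Δ * (2 * k + 1) + r - Δ = 2 * Δ * k + r := by ring_nf; omega
    rw [phi, if_neg (by rw [hq]; exact Nat.not_even_iff_odd.2 (odd_two_mul_add_one k)), hsplit,
      blockCount_two_mul_mul_add (by omega), hq, Nat.add_sub_cancel, Nat.mul_div_cancel_left _ two_pos]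
    ring_nf; omega

section ShiftFree

variable {Δ N : ℕ} {s : Finset ℕ}

lemma card_le_of_subset_range_two_mul (hs : s ⊆ range (2 * Δ)) (hfree : ∀ j ∈ s, j + Δ ∉ s) :
    #s ≤ Δ := by
  calc #s ≤ #(range Δ) := card_le_card_of_injOn (fun j => if j < Δ then j else j - Δ) ?_ ?_
    _ = Δ := card_range Δ
  · intro j hj
    have := mem_range.1 (hs hj)
    simp only [coe_range, Set.mem_Iio]
    split_ifs <;> omega
  · intro i hi j hj hij
    have hi' := mem_range.1 (hs hi)
    have hj' := mem_range.1 (hs hj)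
    simp only at hij
    split_ifs at hij with h₁ h₂ h₂
    · exact hij
    · exact (hfree i hi (by rwa [show i + Δ = j by omega])).elim
    · exact (hfree j hj (by rwa [show j + Δ = i by omega])).elim
    · omega

theorem card_le_blockCount (hs : s ⊆ range N) (hfree : ∀ j ∈ s, j + Δ ∉ s) :
    #s ≤ blockCount Δ N := by
  induction N using Nat.strong_induction_on generalizing s with
  | _ N ih =>
  rcases Nat.eq_zero_or_pos Δ with rfl | hΔ
  · rw [eq_empty_of_forall_notMem fun j hj => hfree j hj (by simpa using hj)]
    simp
  rcases lt_or_ge N (2 * Δ) with hN | hN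
  · rw [blockCount_of_lt hN]
    exact le_min ((card_le_card hs).trans_eq (card_range N))
      (card_le_of_subset_range_two_mul (hs.trans (range_subset_range.2 hN.le)) hfree)
  obtain ⟨M, rfl⟩ : ∃ M, N = M + 2 * Δ := ⟨N - 2 * Δ, by omega⟩
  have hlow : #{j ∈ s | j < 2 * Δ} ≤ Δ :=
    card_le_of_subset_range_two_mul (fun j hj => mem_range.2 (mem_filter.1 hj).2)
      (fun j hj hj' => hfree j (mem_filter.1 hj).1 (mem_filter.1 hj').1)
  have hhigh : #{j ∈ s | ¬j < 2 * Δ} ≤ #{j ∈ range M | j + 2 * Δ ∈ s} := by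
    refine card_le_card_of_injOn (· - 2 * Δ) (fun j hj => ?_) (fun i hi j hj hij => ?_)
    · obtain ⟨hjs, hj⟩ := mem_filter.1 hj
      have := mem_range.1 (hs hjs)
      simp only [mem_coe, mem_filter, mem_range]
      exact ⟨by omega, by rwa [Nat.sub_add_cancel (by omega)]⟩
    · have := (mem_filter.1 hi).2
      have := (mem_filter.1 hj).2
      simp only at hij
      omega
  have hrest : #{j ∈ range M | j + 2 * Δ ∈ s} ≤ blockCount Δ M :=
    ih M (by omega) (filter_subset _ _) fun j hj hj' =>
      hfree _ (mem_filter.1 hj).2 (by simpa only [add_right_comm] using (mem_filter.1 hj').2)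
  rw [blockCount_add_two_mul, ← card_filter_add_card_filter_not (fun j => j < 2 * Δ)]
  omega

def evenBlocks (Δ N : ℕ) : Finset ℕ := {j ∈ range N | j % (2 * Δ) < Δ}

lemma card_evenBlocks_of_le (h : N ≤ 2 * Δ) : #(evenBlocks Δ N) = min N Δ := by
  rw [← card_range (min N Δ), evenBlocks]
  congr 1
  ext j
  simp only [mem_filter, mem_range, lt_min_iff]
  by_cases hj : j < N
  · rw [Nat.mod_eq_of_lt (by omega)]
  · tauto

theorem card_evenBlocks : #(evenBlocks Δ N) = blockCount Δ N := by
  induction N using Nat.strong_induction_on with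
  | _ N ih =>
  rcases Nat.eq_zero_or_pos Δ with rfl | hΔ
  · simp [evenBlocks, blockCount]
  rcases lt_or_ge N (2 * Δ) with hN | hN
  · rw [blockCount_of_lt hN, card_evenBlocks_of_le hN.le]
  obtain ⟨M, rfl⟩ : ∃ M, N = M + 2 * Δ := ⟨N - 2 * Δ, by omega⟩
  rw [evenBlocks, card_filter, add_comm, sum_range_add, ← card_filter, ← evenBlocks,
    card_evenBlocks_of_le le_rfl]
  simp only [Nat.add_mod_left]
  rw [← card_filter, ← evenBlocks, ih M (by omega), add_comm (2 * Δ), blockCount_add_two_mul]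
  omega

variable (Δ) in
lemma evenBlocks_subset_range {n : ℕ} (h : N ≤ n) : evenBlocks Δ N ⊆ range n :=
  (filter_subset _ _).trans (range_subset_range.2 h)

lemma add_lt_of_mem_evenBlocks {n j : ℕ} (hj : j ∈ evenBlocks Δ (n - Δ)) : j + Δ < n := by
  have := mem_range.1 (mem_filter.1 hj).1
  omega

lemma add_notMem_evenBlocks {j : ℕ} (hj : j ∈ evenBlocks Δ N) : j + Δ ∉ evenBlocks Δ N := by
  have hmod := (mem_filter.1 hj).2
  rw [evenBlocks, mem_filter, Nat.add_mod, Nat.mod_eq_of_lt (by omega : Δ < 2 * Δ),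
    Nat.mod_eq_of_lt (by omega)]
  omega

end ShiftFree

lemma card_filter_add_notMem_le (Z : Finset ℕ) (n Δ : ℕ) :
    #{j ∈ Z | j + Δ < n ∧ j + Δ ∉ Z} ≤ blockCount Δ (n - Δ) :=
  card_le_blockCount (fun j hj => mem_range.2 (by have := (mem_filter.1 hj).2.1; omega))
    fun j hj hj' => (mem_filter.1 hj).2.2 (mem_filter.1 hj').1

def zeroSet {n : ℕ} (a : Fin n → ZMod 2) : Finset ℕ :=
  ({i | a i = 0} : Finset (Fin n)).map Fin.valEmbedding

section zeroSet

variable {n : ℕ} (a : Fin n → ZMod 2)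

lemma mem_zeroSet {j : ℕ} : j ∈ zeroSet a ↔ ∃ h : j < n, a ⟨j, h⟩ = 0 := by
  simp only [zeroSet, mem_map, mem_filter, mem_univ, true_and, Fin.valEmbedding_apply]
  constructor
  · rintro ⟨i, hi, rfl⟩
    exact ⟨i.isLt, hi⟩
  · rintro ⟨h, hj⟩
    exact ⟨_, hj, rfl⟩

lemma zeroSet_subset_range : zeroSet a ⊆ range n := fun _ hj =>
  mem_range.2 ((mem_zeroSet a).1 hj).1

lemma wt_add_card_zeroSet : wt a + #(zeroSet a) = n := by
  have hzero : ∀ v : ZMod 2, v = 0 ↔ ¬v = 1 := by decide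
  rw [wt, zeroSet, card_map, filter_congr fun i _ => hzero (a i),
    card_filter_add_card_filter_not, card_univ, Fintype.card_fin]

lemma exists_zeroSet_eq {Z : Finset ℕ} (hZ : Z ⊆ range n) :
    ∃ a : Fin n → ZMod 2, zeroSet a = Z := by
  refine ⟨fun i => if (i : ℕ) ∈ Z then 0 else 1, Finset.ext fun j => ?_⟩
  rw [mem_zeroSet]
  constructor
  · rintro ⟨_, h⟩
    by_contra hj
    simp [hj] at h
  · intro hj
    exact ⟨mem_range.1 (hZ hj), by simp [hj]⟩

lemma gamma1_eq_one_iff (Δ : ℕ) (i : Fin (n + Δ)) :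
    gamma1 Δ a i = 1 ↔ ((i : ℕ) < n → (i : ℕ) ∈ zeroSet a) := by
  by_cases hi : (i : ℕ) < n <;> simp [gamma1, hi, mem_zeroSet]

lemma gamma2_eq_one_iff (Δ : ℕ) (i : Fin (n + Δ)) :
    gamma2 Δ a i = 1 ↔ Δ ≤ i ∧ (i : ℕ) - Δ ∈ zeroSet a := by
  by_cases hi : Δ ≤ (i : ℕ)
  · have : (i : ℕ) - Δ < n := by omega
    simp [gamma2, hi, mem_zeroSet, this]
  · simp [gamma2, hi]

lemma overlap_add_card_filter (Δ : ℕ) :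
    overlap Δ a + #{j ∈ zeroSet a | j + Δ < n ∧ j + Δ ∉ zeroSet a} = #(zeroSet a) := by
  rw [← card_filter_add_card_filter_not (fun j => j + Δ < n ∧ j + Δ ∉ zeroSet a) (s := zeroSet a),
    add_comm, overlap]
  congr 1
  refine card_bij (fun i _ => (i : ℕ) - Δ) (fun i hi => ?_) (fun i₁ h₁ i₂ h₂ h => ?_)
    (fun j hj => ?_)
  · simp only [mem_filter, mem_univ, true_and, gamma1_eq_one_iff, gamma2_eq_one_iff] at hi ⊢
    rw [Nat.sub_add_cancel hi.2.1]
    tauto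
  · simp only [mem_filter, mem_univ, true_and, gamma2_eq_one_iff] at h₁ h₂
    exact Fin.ext (by omega)
  · simp only [mem_filter, not_and, not_not] at hj
    have := mem_range.1 (zeroSet_subset_range a hj.1)
    refine ⟨⟨j + Δ, by omega⟩, ?_, by simp⟩
    simp only [mem_filter, mem_univ, true_and, gamma1_eq_one_iff, gamma2_eq_one_iff,
      Nat.add_sub_cancel]
    exact ⟨hj.2, by omega, hj.1⟩

end zeroSet

lemma rho_le_overlap (Δ : ℕ) {nM : ℕ} (a : Fin nM → ZMod 2) : rho Δ nM (wt a) ≤ overlap Δ a :=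
  Nat.sInf_le ⟨a, rfl, rfl⟩

lemma exists_overlap_eq_rho (Δ : ℕ) {nM x : ℕ} (hx : x ≤ nM) :
    ∃ a : Fin nM → ZMod 2, wt a = x ∧ overlap Δ a = rho Δ nM x := by
  obtain ⟨a, ha⟩ := exists_zeroSet_eq (range_subset_range.2 (Nat.sub_le nM x))
  have hwt := wt_add_card_zeroSet a
  rw [ha, card_range] at hwt
  exact Nat.sInf_mem (s := overlap Δ '' {a : Fin nM → ZMod 2 | wt a = x})
    ⟨overlap Δ a, a, (by omega : wt a = x), rfl⟩

lemma exists_overlap_eq_zero (Δ nM : ℕ) :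
    ∃ a : Fin nM → ZMod 2, overlap Δ a = 0 ∧ wt a + blockCount Δ (nM - Δ) = nM := by
  obtain ⟨a, ha⟩ := exists_zeroSet_eq (evenBlocks_subset_range Δ (Nat.sub_le nM Δ))
  have hov := overlap_add_card_filter a Δ
  rw [ha, filter_true_of_mem fun j hj => ⟨add_lt_of_mem_evenBlocks hj,
    add_notMem_evenBlocks hj⟩] at hov
  have hwt := wt_add_card_zeroSet a
  rw [ha, card_evenBlocks] at hwt
  exact ⟨a, by omega, hwt⟩

/-- The maximum over `0 ≤ x ≤ n_M` of `2n_M + Δ − x − ρ(x)` equals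
`n_M + φ(n_M, Δ)`. -/
theorem max_rate_eq_phi (nM Δ : ℕ) :
    IsGreatest {v : ℤ | ∃ x : ℕ, x ≤ nM ∧
        v = 2 * (nM : ℤ) + (Δ : ℤ) - (x : ℤ) - (rho Δ nM x : ℤ)}
      ((nM : ℤ) + (phi nM Δ : ℤ)) := by
  rw [phi_eq_add_blockCount]
  constructor
  · obtain ⟨a, hov, hwt⟩ := exists_overlap_eq_zero Δ nM
    have hρ : rho Δ nM (wt a) = 0 := Nat.eq_zero_of_le_zero (hov ▸ rho_le_overlap Δ a)
    refine ⟨wt a, by omega, ?_⟩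
    rw [hρ]
    omega
  · rintro _ ⟨x, hx, rfl⟩
    obtain ⟨a, rfl, hρ⟩ := exists_overlap_eq_rho Δ hx
    have hov := overlap_add_card_filter a Δ
    have hwt := wt_add_card_zeroSet a
    have hgain := card_filter_add_notMem_le (zeroSet a) nM Δ
    rw [← hρ]
    omega
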